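/- arXiv:1910.03740 — 2 statements merged into one kernel-verified Lean document; each statement's English description precedes it below -/
import Mathlib

section
/- Let s ≥ 2 and suppose the Keller graph G_{6,s} contains no clique of size 64. If G_{7,s} contains a clique of size 128, then G_{7,s} contains a clique of size 128 that includes the vertices (0,0,0,0,0,0,0) and (s,1,0,0,0,0,0). -/
/-!
Split a `128`-clique of `G_{7,s}` according to whether the first coordinate is `< s`: the larger
half has at least `64` vertices, and no two of them differ by `s` in the first coordinate. If the
clique contained no tight pair (two vertices differing in exactly two coordinates, by `s` in one
and by neither `0` nor `s` in the other), deleting the first coordinate would map `64` of them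
onto a clique of `G_{6,s}`. A tight pair can be moved to `0, (s,1,0,…,0)` by an endomorphism of
the Keller graph: permute the coordinates, then apply in each coordinate an injection of
`{0,…,2s-1}` commuting with `x ↦ x + s`, assembled from swaps of pairs `{d, d + s}`.
-/

/-- The Keller graph `G_{n,s}`: vertices are `n`-tuples with entries in `{0,…,2s-1}`,
two vertices adjacent iff they differ by exactly `s` in at least one coordinate
and differ in at least two coordinates. -/
def kellerGraph (n s : ℕ) : SimpleGraph (Fin n → Fin (2 * s)) where
  Adj x y :=
    (∃ i, (x i : ℕ) + s = (y i : ℕ) ∨ (y i : ℕ) + s = (x i : ℕ)) ∧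
    (∃ i j, i ≠ j ∧ x i ≠ y i ∧ x j ≠ y j)
  symm := by
    constructor
    rintro x y ⟨⟨i, h⟩, j, k, hjk, hj, hk⟩
    exact ⟨⟨i, Or.symm h⟩, j, k, hjk, hj.symm, hk.symm⟩
  loopless := by
    constructor
    rintro x ⟨-, j, k, hjk, hj, hk⟩
    exact hj rfl

namespace Keller

open Finset Function SimpleGraph

variable {s : ℕ}

/-- `a + s` modulo `2 * s`, the unique entry differing from `a` by exactly `s`. -/
def antipode (a : Fin (2 * s)) : Fin (2 * s) :=
  ⟨if (a : ℕ) < s then a + s else a - s, by have := a.isLt; split <;> omega⟩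

lemma val_antipode (a : Fin (2 * s)) :
    (antipode a : ℕ) = if (a : ℕ) < s then a + s else a - s := rfl

lemma antipode_antipode (a : Fin (2 * s)) : antipode (antipode a) = a := by
  have := a.isLt
  ext
  simp only [val_antipode]
  split_ifs <;> omega

lemma antipode_ne (a : Fin (2 * s)) : antipode a ≠ a := by
  have := a.isLt
  simp only [Ne, Fin.ext_iff, val_antipode]
  split_ifs <;> omega

lemma antipode_lt_iff (a : Fin (2 * s)) : (antipode a : ℕ) < s ↔ ¬ (a : ℕ) < s := by
  have := a.isLt
  simp only [val_antipode]
  split_ifs <;> omega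

lemma add_eq_or_add_eq_iff (a b : Fin (2 * s)) :
    ((a : ℕ) + s = b ∨ (b : ℕ) + s = a) ↔ b = antipode a := by
  have := a.isLt; have := b.isLt
  simp only [Fin.ext_iff, val_antipode]
  split_ifs <;> omega

/-- The involution exchanging the pairs `{d, antipode d}` and `{e, antipode e}`. -/
def pairSwap (d e x : Fin (2 * s)) : Fin (2 * s) :=
  if x = d then e
  else if x = antipode d then antipode e
  else if x = e then d
  else if x = antipode e then antipode d
  else x

lemma pairSwap_involutive (d e : Fin (2 * s)) : Involutive (pairSwap d e) := by
  intro x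
  unfold pairSwap
  grind [antipode_antipode, antipode_ne]

lemma pairSwap_antipode (d e x : Fin (2 * s)) :
    pairSwap d e (antipode x) = antipode (pairSwap d e x) := by
  unfold pairSwap
  grind [antipode_antipode, antipode_ne]

lemma pairSwap_apply_left (d e : Fin (2 * s)) : pairSwap d e d = e := if_pos rfl

lemma pairSwap_apply_of_ne {d e x : Fin (2 * s)} (hd : x ≠ d) (hd' : x ≠ antipode d)
    (he : x ≠ e) (he' : x ≠ antipode e) : pairSwap d e x = x := by
  simp [pairSwap, *]

lemma exists_map_comm_antipode {a b c d : Fin (2 * s)} (h : b = a ↔ d = c)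
    (h' : b = antipode a ↔ d = antipode c) :
    ∃ φ : Fin (2 * s) → Fin (2 * s), Injective φ ∧ (∀ x, φ (antipode x) = antipode (φ x)) ∧
      φ a = c ∧ φ b = d := by
  have hac : pairSwap a c a = c := pairSwap_apply_left a c
  by_cases hb : b = a ∨ b = antipode a
  · refine ⟨pairSwap a c, (pairSwap_involutive a c).injective, pairSwap_antipode a c, hac, ?_⟩
    rcases hb with rfl | rfl
    · rw [h.1 rfl, hac]
    · rw [h'.1 rfl, pairSwap_antipode, hac]
  · rw [not_or] at hb
    set b' := pairSwap a c b
    have hb'c : b' ≠ c := fun hb' ↦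
      hb.1 ((pairSwap_involutive a c).injective (hb'.trans hac.symm))
    have hb'c' : b' ≠ antipode c := fun hb' ↦ hb.2
      ((pairSwap_involutive a c).injective (hb'.trans (by rw [pairSwap_antipode, hac])))
    refine ⟨pairSwap b' d ∘ pairSwap a c,
      (pairSwap_involutive b' d).injective.comp (pairSwap_involutive a c).injective,
      fun x ↦ by simp only [comp_apply, pairSwap_antipode], ?_, pairSwap_apply_left b' d⟩
    rw [comp_apply, hac]
    refine pairSwap_apply_of_ne hb'c.symm (fun hc ↦ hb'c' ?_) (fun hc ↦ hb.1 (h.2 hc.symm))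
      (fun hc ↦ hb.2 (h'.2 ?_))
    · rw [hc, antipode_antipode]
    · rw [hc, antipode_antipode]

variable {n : ℕ}

lemma adj_iff {x y : Fin n → Fin (2 * s)} :
    (kellerGraph n s).Adj x y ↔
      (∃ i, y i = antipode (x i)) ∧ ∃ i j, i ≠ j ∧ x i ≠ y i ∧ x j ≠ y j := by
  simp only [kellerGraph, add_eq_or_add_eq_iff]

def permCoordsHom (σ : Equiv.Perm (Fin n)) : kellerGraph n s →g kellerGraph n s where
  toFun x := x ∘ σ
  map_rel' {x y} h := by
    obtain ⟨⟨i, hi⟩, j, k, hjk, hj, hk⟩ := adj_iff.1 h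
    refine adj_iff.2 ⟨⟨σ.symm i, ?_⟩, σ.symm j, σ.symm k, σ.symm.injective.ne hjk, ?_, ?_⟩ <;>
      simpa only [comp_apply, Equiv.apply_symm_apply]

def mapCoordsHom (φ : Fin n → Fin (2 * s) → Fin (2 * s)) (hφ : ∀ k, Injective (φ k))
    (hφ' : ∀ k x, φ k (antipode x) = antipode (φ k x)) :
    kellerGraph n s →g kellerGraph n s where
  toFun x k := φ k (x k)
  map_rel' {x y} h := by
    obtain ⟨⟨i, hi⟩, j, k, hjk, hj, hk⟩ := adj_iff.1 h
    exact adj_iff.2 ⟨⟨i, by rw [hi, hφ']⟩, j, k, hjk, (hφ j).ne hj, (hφ k).ne hk⟩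

lemma _root_.SimpleGraph.IsNClique.image {α β : Type*} [DecidableEq β] {G : SimpleGraph α}
    {H : SimpleGraph β} {m : ℕ} {K : Finset α} {f : α → β} (hK : G.IsNClique m K)
    (hf : ∀ x ∈ K, ∀ y ∈ K, G.Adj x y → H.Adj (f x) (f y)) : H.IsNClique m (K.image f) := by
  have hadj : ∀ x ∈ K, ∀ y ∈ K, x ≠ y → H.Adj (f x) (f y) := fun x hx y hy hxy ↦
    hf x hx y hy (hK.1 hx hy hxy)
  refine ⟨?_, ?_⟩
  · simp only [coe_image]
    rintro _ ⟨x, hx, rfl⟩ _ ⟨y, hy, rfl⟩ hxy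
    exact hadj x hx y hy (ne_of_apply_ne f hxy)
  · rw [card_image_of_injOn fun x hx y hy hxy ↦ not_not.1 fun hne ↦ (hadj x hx y hy hne).ne hxy,
      hK.2]

def IsTightPair (u v : Fin n → Fin (2 * s)) (i j : Fin n) : Prop :=
  i ≠ j ∧ v i = antipode (u i) ∧ v j ≠ u j ∧ v j ≠ antipode (u j) ∧
    ∀ k, k ≠ i → k ≠ j → v k = u k

namespace IsTightPair

variable {u v : Fin n → Fin (2 * s)} {i j : Fin n}

lemma eq_iff (h : IsTightPair u v i j) (k : Fin n) : v k = u k ↔ k ≠ i ∧ k ≠ j := by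
  obtain ⟨hij, hi, hj, -, hk⟩ := h
  refine ⟨fun hvk ↦ ⟨?_, ?_⟩, fun hk' ↦ hk k hk'.1 hk'.2⟩ <;> rintro rfl
  · exact antipode_ne (u k) (hi.symm.trans hvk)
  · exact hj hvk

lemma eq_antipode_iff (h : IsTightPair u v i j) (k : Fin n) : v k = antipode (u k) ↔ k = i := by
  obtain ⟨hij, hi, -, hj, hk⟩ := h
  refine ⟨fun hvk ↦ ?_, by rintro rfl; exact hi⟩
  by_contra hki
  by_cases hkj : k = j
  · exact hj (hkj ▸ hvk)
  · exact antipode_ne (u k) (hvk.symm.trans (hk k hki hkj))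

end IsTightPair

lemma exists_hom_of_isTightPair {u v u' v' : Fin n → Fin (2 * s)} {i j i' j' : Fin n}
    (h : IsTightPair u v i j) (h' : IsTightPair u' v' i' j') :
    ∃ Φ : kellerGraph n s →g kellerGraph n s, Φ u = u' ∧ Φ v = v' := by
  obtain ⟨σ, hσ⟩ := Equiv.Perm.exists_extending_pair ![i', j'] ![i, j]
    (by simp [Injective, Fin.forall_fin_two, h'.1, h'.1.symm])
    (by simp [Injective, Fin.forall_fin_two, h.1, h.1.symm])
  have hσi : σ i' = i := hσ 0
  have hσj : σ j' = j := hσ 1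
  have heq (k : Fin n) : v (σ k) = u (σ k) ↔ v' k = u' k := by
    rw [h.eq_iff, h'.eq_iff, ← hσi, ← hσj, σ.injective.ne_iff, σ.injective.ne_iff]
  have hanti (k : Fin n) : v (σ k) = antipode (u (σ k)) ↔ v' k = antipode (u' k) := by
    rw [h.eq_antipode_iff, h'.eq_antipode_iff, ← hσi, σ.injective.eq_iff]
  choose φ hφ hφ' hφu hφv using fun k ↦ exists_map_comm_antipode (heq k) (hanti k)
  exact ⟨(mapCoordsHom φ hφ hφ').comp (permCoordsHom σ), funext hφu, funext hφv⟩

lemma exists_large_subset_forall_ne_antipode {α : Type*} (K : Finset α) (f : α → Fin (2 * s)) :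
    ∃ A ⊆ K, #K ≤ 2 * #A ∧ ∀ x ∈ A, ∀ y ∈ A, f y ≠ antipode (f x) := by
  have hside (x y : α) (hxy : (f x : ℕ) < s ↔ (f y : ℕ) < s) : f y ≠ antipode (f x) := by
    intro hy
    rw [hy] at hxy
    exact iff_not_self (hxy.trans (antipode_lt_iff _))
  set L := K.filter fun x ↦ (f x : ℕ) < s
  set U := K.filter fun x ↦ ¬ (f x : ℕ) < s
  have hcard : #L + #U = #K := card_filter_add_card_filter_not _
  by_cases hle : #U ≤ #L
  · refine ⟨L, filter_subset _ K, by omega, fun x hx y hy ↦ hside x y ?_⟩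
    exact iff_of_true (mem_filter.1 hx).2 (mem_filter.1 hy).2
  · refine ⟨U, filter_subset _ K, by omega, fun x hx y hy ↦ hside x y ?_⟩
    exact iff_of_false (mem_filter.1 hx).2 (mem_filter.1 hy).2

lemma adj_tail {u v : Fin (n + 1) → Fin (2 * s)} (huv : (kellerGraph (n + 1) s).Adj u v)
    (h0 : v 0 ≠ antipode (u 0)) (hnt : ∀ i, ¬ IsTightPair u v i 0) :
    (kellerGraph n s).Adj (Fin.tail u) (Fin.tail v) := by
  obtain ⟨⟨i, hi⟩, j, k, hjk, hj, hk⟩ := adj_iff.1 huv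
  have hi0 : i ≠ 0 := by rintro rfl; exact h0 hi
  obtain ⟨i, rfl⟩ := Fin.exists_succ_eq.2 hi0
  refine adj_iff.2 ⟨⟨i, hi⟩, ?_⟩
  by_cases hu0 : v 0 = u 0
  · have hj0 : j ≠ 0 := by rintro rfl; exact hj hu0.symm
    have hk0 : k ≠ 0 := by rintro rfl; exact hk hu0.symm
    obtain ⟨j, rfl⟩ := Fin.exists_succ_eq.2 hj0
    obtain ⟨k, rfl⟩ := Fin.exists_succ_eq.2 hk0
    exact ⟨j, k, Fin.succ_injective _ |>.ne_iff.1 hjk, hj, hk⟩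
  · -- `u, v` is not a tight pair, so they differ in a third coordinate
    obtain ⟨l, hli, hl0, hl⟩ : ∃ l, l ≠ i.succ ∧ l ≠ 0 ∧ v l ≠ u l := by
      by_contra! hl
      exact hnt i.succ ⟨hi0, hi, hu0, h0, hl⟩
    obtain ⟨l, rfl⟩ := Fin.exists_succ_eq.2 hl0
    refine ⟨i, l, fun h ↦ hli (congrArg Fin.succ h).symm, ?_, Ne.symm hl⟩
    exact fun h ↦ antipode_ne _ (hi.symm.trans h.symm)

lemma exists_isTightPair_of_isNClique {m : ℕ} {K : Finset (Fin (n + 1) → Fin (2 * s))}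
    (hn : ∀ L : Finset (Fin n → Fin (2 * s)), ¬ (kellerGraph n s).IsNClique m L)
    (hK : (kellerGraph (n + 1) s).IsNClique (2 * m) K) :
    ∃ u ∈ K, ∃ v ∈ K, ∃ i j, IsTightPair u v i j := by
  by_contra! hnt
  obtain ⟨A, hAK, hA, hA0⟩ := exists_large_subset_forall_ne_antipode K (· 0)
  obtain ⟨B, hBA, hB⟩ := exists_subset_card_eq (show m ≤ #A by rw [hK.2] at hA; omega)
  refine hn (B.image Fin.tail) (IsNClique.image ⟨hK.1.subset ?_, hB⟩ fun x hx y hy hxy ↦ ?_)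
  · exact coe_subset.2 (hBA.trans hAK)
  · exact adj_tail hxy (hA0 x (hBA hx) y (hBA hy)) (hnt x (hAK (hBA hx)) y (hAK (hBA hy)) · 0)

end Keller

open Finset Keller

/-- If `G_{6,s}` has no clique of size 64 and `G_{7,s}` (`s ≥ 2`) has a clique of
size 128, then it has one containing `(0,0,0,0,0,0,0)` and `(s,1,0,0,0,0,0)`. -/
theorem keller_clique_two_vertices (s : ℕ) (hs : 2 ≤ s)
    (h6 : ∀ K : Finset (Fin 6 → Fin (2 * s)), ¬ (kellerGraph 6 s).IsNClique 64 K)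
    (h7 : ∃ K : Finset (Fin 7 → Fin (2 * s)), (kellerGraph 7 s).IsNClique 128 K) :
    ∃ K : Finset (Fin 7 → Fin (2 * s)), (kellerGraph 7 s).IsNClique 128 K ∧
      (fun _ => (⟨0, by omega⟩ : Fin (2 * s))) ∈ K ∧
      (![⟨s, by omega⟩, ⟨1, by omega⟩, ⟨0, by omega⟩, ⟨0, by omega⟩,
         ⟨0, by omega⟩, ⟨0, by omega⟩, ⟨0, by omega⟩] : Fin 7 → Fin (2 * s)) ∈ K := by
  obtain ⟨K, hK⟩ := h7
  obtain ⟨u, hu, v, hv, i, j, huv⟩ := exists_isTightPair_of_isNClique (m := 64) h6 hK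
  have htarget : IsTightPair (fun _ => (⟨0, by omega⟩ : Fin (2 * s)))
      ![⟨s, by omega⟩, ⟨1, by omega⟩, ⟨0, by omega⟩, ⟨0, by omega⟩,
        ⟨0, by omega⟩, ⟨0, by omega⟩, ⟨0, by omega⟩] 0 1 := by
    refine ⟨by decide, ?_, ?_, ?_, ?_⟩
    · ext; simp [val_antipode]
    · simp [Fin.ext_iff]
    · simp [Fin.ext_iff, val_antipode, show 0 < s by omega]
      omega
    · intro k hk0 hk1
      fin_cases k <;> first | exact absurd rfl hk0 | exact absurd rfl hk1 | rfl
  obtain ⟨Φ, hΦu, hΦv⟩ := exists_hom_of_isTightPair huv htarget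
  exact ⟨K.image Φ, hK.image fun x _ y _ ↦ Φ.map_adj, hΦu ▸ mem_image_of_mem Φ hu,
    hΦv ▸ mem_image_of_mem Φ hv⟩
end

section
/- For all d ≥ 1 and s ≥ 1, the Keller graph G_{d,s} has a clique of size 2^d if and only if there exists a faceshare-free s-discrete periodic cube tiling of ℝ^d. -/
/-!
Given a clique `K`, take the cubes with corners `k / s + 2z` (`k ∈ K`, `z ∈ ℤ^d`). Two vertices of
`K` differ by `s` in some coordinate, so their cubes differ there by an odd integer and are
disjoint; they differ in a second coordinate, so no two cubes faceshare; and for each point `y`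
the parities of `⌊y i - k i / s⌋` separate the `2^d` vertices of `K`, so one `k` makes them all
even, which puts `y` in a cube.

Conversely, a periodic tiling can be read modulo 2. Encode each coordinate of a corner by the
fractional part (at most `s` values) and the parity of its floor, a number in `{0, …, 2s-1}`. Two
tiles that are not congruent modulo `2ℤ^d` differ by an odd integer in some coordinate (otherwise
a translate of one would overlap the other), and are not congruent in a second coordinate
(otherwise a translate would faceshare), so their codes are adjacent in the Keller graph. The tiles
containing the `2^d` points of `{0,1}^d` are pairwise non-congruent, which gives the clique.
-/

/-- The half-open unit cube `[x_1, x_1+1) × ⋯ × [x_d, x_d+1)` with corner `x`. -/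
def cube (d : ℕ) (x : Fin d → ℝ) : Set (Fin d → ℝ) :=
  {y | ∀ i, x i ≤ y i ∧ y i < x i + 1}

/-- `T` is a cube tiling of `ℝ^d`: the cubes with corners in `T` are pairwise
disjoint and their union is all of `ℝ^d`. -/
def IsTiling (d : ℕ) (T : Set (Fin d → ℝ)) : Prop :=
  (T.Pairwise fun t t' => Disjoint (cube d t) (cube d t')) ∧
  (⋃ t ∈ T, cube d t) = Set.univ

/-- The `i`-th standard basis vector of `ℝ^d`. -/
def stdBasis (d : ℕ) (i : Fin d) : Fin d → ℝ := fun j => if j = i then 1 else 0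

/-- Two cubes (given by their corners `x`, `y`) faceshare if `y = x ± e_i`
for some standard basis vector `e_i`. -/
def Faceshare (d : ℕ) (x y : Fin d → ℝ) : Prop :=
  ∃ i : Fin d, y = x + stdBasis d i ∨ y = x - stdBasis d i

/-- A tiling is faceshare-free if no two distinct cubes of it faceshare. -/
def FaceshareFree (d : ℕ) (T : Set (Fin d → ℝ)) : Prop :=
  ∀ t ∈ T, ∀ t' ∈ T, t ≠ t' → ¬ Faceshare d t t'

/-- A tiling `T` is periodic if `t + 2z ∈ T` for every `t ∈ T` and `z ∈ ℤ^d`. -/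
def PeriodicTiling (d : ℕ) (T : Set (Fin d → ℝ)) : Prop :=
  ∀ t ∈ T, ∀ z : Fin d → ℤ, (fun j => t j + 2 * (z j : ℝ)) ∈ T

/-- A tiling is `s`-discrete if for each coordinate `i`, the values `t i` modulo 1
over `t ∈ T` take at most `s` distinct values. -/
def SDiscrete (d s : ℕ) (T : Set (Fin d → ℝ)) : Prop :=
  ∀ i : Fin d, ∃ S : Finset ℝ, S.card ≤ s ∧ ∀ t ∈ T, Int.fract (t i) ∈ S

open AddCommGroup
open Int (fract)

section Residues

lemma modEq_one_iff_fract_eq {a b : ℝ} : a ≡ b [PMOD 1] ↔ fract a = fract b := by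
  rw [modEq_comm, modEq_iff_zsmul', Int.fract_eq_fract]
  simp

lemma modEq_one_of_modEq_two {a b : ℝ} (h : a ≡ b [PMOD 2]) : a ≡ b [PMOD 1] :=
  ModEq.of_nsmul (n := 2) (by simpa using h)

lemma modEq_two_iff_fract_eq_and_even {a b : ℝ} :
    a ≡ b [PMOD 2] ↔ fract a = fract b ∧ Even (⌊b⌋ - ⌊a⌋) := by
  rw [modEq_iff_eq_add_zsmul]
  constructor
  · rintro ⟨z, rfl⟩
    have h2z : z • (2 : ℝ) = ((2 * z : ℤ) : ℝ) := by push_cast; ring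
    rw [h2z, Int.fract_add_intCast, Int.floor_add_intCast]
    exact ⟨rfl, by simp⟩
  · rintro ⟨hfract, r, hr⟩
    refine ⟨r, ?_⟩
    have hb : b - a = ((⌊b⌋ - ⌊a⌋ : ℤ) : ℝ) := by
      push_cast
      linarith [Int.floor_add_fract a, Int.floor_add_fract b]
    rw [hr] at hb
    push_cast at hb
    simp only [zsmul_eq_mul]
    linarith

lemma add_one_modEq_two_iff_fract_eq_and_odd {a b : ℝ} :
    a + 1 ≡ b [PMOD 2] ↔ fract a = fract b ∧ Odd (⌊b⌋ - ⌊a⌋) := by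
  rw [modEq_two_iff_fract_eq_and_even, Int.fract_add_one, Int.floor_add_one,
    ← Int.not_even_iff_odd, sub_add_eq_sub_sub, Int.even_sub_one]

lemma not_modEq_two_of_add_one_modEq_two {a b : ℝ} (h : a + 1 ≡ b [PMOD 2]) :
    ¬ a ≡ b [PMOD 2] := fun hab =>
  Int.not_odd_iff_even.mpr (modEq_two_iff_fract_eq_and_even.mp hab).2
    (add_one_modEq_two_iff_fract_eq_and_odd.mp h).2

lemma not_add_one_modEq_two_self (a : ℝ) : ¬ a + 1 ≡ a [PMOD 2] :=
  fun h => not_modEq_two_of_add_one_modEq_two h modEq_rfl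

lemma one_le_abs_sub_of_modEq_one {a b : ℝ} (h : a ≡ b [PMOD 1]) (hne : a ≠ b) :
    1 ≤ |a - b| := by
  obtain ⟨z, rfl⟩ := modEq_iff_eq_add_zsmul.mp h
  have hz : z ≠ 0 := by rintro rfl; simp at hne
  simpa using (by exact_mod_cast Int.one_le_abs hz : (1 : ℝ) ≤ |(z : ℝ)|)

lemma one_le_abs_sub_of_add_one_modEq_two {a b : ℝ} (h : a + 1 ≡ b [PMOD 2]) : 1 ≤ |a - b| := by
  refine one_le_abs_sub_of_modEq_one ?_ fun hab => not_add_one_modEq_two_self a (hab ▸ h)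
  exact (add_modEq_left.mpr self_modEq_zero).symm.trans (modEq_one_of_modEq_two h)

lemma exists_abs_add_two_mul_sub_lt_one {a b : ℝ} (h : ¬ a + 1 ≡ b [PMOD 2]) :
    ∃ z : ℤ, |b + 2 * z - a| < 1 := by
  refine ⟨-round ((b - a) / 2), ?_⟩
  set k := round ((b - a) / 2)
  have hk : |(b - a) / 2 - k| ≤ 1 / 2 := abs_sub_round _
  have hle : |b + 2 * ((-k : ℤ) : ℝ) - a| ≤ 1 := by
    have : b + 2 * ((-k : ℤ) : ℝ) - a = 2 * ((b - a) / 2 - k) := by push_cast; ring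
    rw [this, abs_mul, abs_two]
    linarith
  refine hle.lt_of_ne fun heq => h ?_
  rw [modEq_iff_eq_add_zsmul]
  rcases abs_eq zero_le_one |>.mp heq with h1 | h1
  · exact ⟨k, by push_cast at h1; simp only [zsmul_eq_mul]; linarith⟩
  · exact ⟨k - 1, by simp only [zsmul_eq_mul]; push_cast at h1 ⊢; linarith⟩

lemma not_modEq_two_of_zero_mem_of_one_mem {a b : ℝ} (ha : (0 : ℝ) ∈ Set.Ico a (a + 1))
    (hb : (1 : ℝ) ∈ Set.Ico b (b + 1)) : ¬ a ≡ b [PMOD 2] := by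
  intro h
  obtain ⟨z, rfl⟩ := modEq_iff_eq_add_zsmul.mp h
  rw [zsmul_eq_mul] at hb
  have h0 : (0 : ℝ) < z := by linarith [ha.1, ha.2, hb.1, hb.2]
  have h1 : (z : ℝ) < 1 := by linarith [ha.1, ha.2, hb.1, hb.2]
  norm_cast at h0 h1
  omega

end Residues

section CoordinateCode

variable {s : ℕ}

lemma exists_injOn_fin {α : Type*} {S : Finset α} (hs : 0 < s) (hS : S.card ≤ s) :
    ∃ φ : α → Fin s, Set.InjOn φ S := by
  classical
  refine ⟨fun x => if hx : x ∈ S then Fin.castLE hS (S.equivFin ⟨x, hx⟩) else ⟨0, hs⟩, ?_⟩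
  intro x hx y hy hxy
  simp only [Finset.mem_coe] at hx hy
  simp only [hx, hy, dite_true, Fin.castLE_inj, EmbeddingLike.apply_eq_iff_eq,
    Subtype.mk.injEq] at hxy
  exact hxy

noncomputable def floorParity (x : ℝ) : Fin 2 := ⟨(⌊x⌋ % 2).toNat, by omega⟩

lemma floorParity_eq_iff {x y : ℝ} : floorParity x = floorParity y ↔ Even (⌊y⌋ - ⌊x⌋) := by
  simp only [floorParity, Fin.ext_iff, Int.even_iff]
  omega

/-- The residue of `x` modulo 2 is recorded by the parity of `⌊x⌋`, as the high digit, and by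
`φ` applied to the fractional part. -/
noncomputable def coordCode (φ : ℝ → Fin s) (x : ℝ) : Fin (2 * s) :=
  finProdFinEquiv (floorParity x, φ (fract x))

lemma coordCode_eq_iff {φ : ℝ → Fin s} {S : Set ℝ} (hφ : Set.InjOn φ S) {x y : ℝ}
    (hx : fract x ∈ S) (hy : fract y ∈ S) :
    coordCode φ x = coordCode φ y ↔ x ≡ y [PMOD 2] := by
  rw [coordCode, coordCode, finProdFinEquiv.apply_eq_iff_eq, Prod.mk.injEq, floorParity_eq_iff,
    hφ.eq_iff hx hy, modEq_two_iff_fract_eq_and_even, and_comm]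

lemma coordCode_add_s_of_add_one_modEq_two (φ : ℝ → Fin s) {x y : ℝ} (h : x + 1 ≡ y [PMOD 2]) :
    (coordCode φ x : ℕ) + s = coordCode φ y ∨ (coordCode φ y : ℕ) + s = coordCode φ x := by
  obtain ⟨hfract, hodd⟩ := add_one_modEq_two_iff_fract_eq_and_odd.mp h
  have hpar : (floorParity x : ℕ) + floorParity y = 1 := by
    simp only [floorParity, Int.odd_iff] at hodd ⊢
    omega
  simp only [coordCode, finProdFinEquiv_apply_val, hfract]
  rcases Nat.add_eq_one_iff.mp hpar with ⟨hx, hy⟩ | ⟨hx, hy⟩ <;> simp [hx, hy]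

end CoordinateCode

section Cubes

variable {d : ℕ}

lemma disjoint_cube_iff {x y : Fin d → ℝ} :
    Disjoint (cube d x) (cube d y) ↔ ∃ i, 1 ≤ |x i - y i| := by
  constructor
  · intro h
    by_contra! hlt
    refine Set.not_disjoint_iff.mpr ⟨fun i => max (x i) (y i), fun i => ?_, fun i => ?_⟩ h <;>
      obtain ⟨h1, h2⟩ := abs_lt.mp (hlt i) <;>
      exact ⟨by simp, max_lt (by linarith) (by linarith)⟩
  · rintro ⟨i, hi⟩
    refine Set.disjoint_left.mpr fun z hx hy => ?_
    obtain ⟨hx1, hx2⟩ := hx i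
    obtain ⟨hy1, hy2⟩ := hy i
    rcases le_abs.mp hi with h | h <;> linarith

variable {T : Set (Fin d → ℝ)}

lemma exists_add_one_modEq_two_of_not_modEq_two
    (hpair : T.Pairwise fun t t' => Disjoint (cube d t) (cube d t')) (hper : PeriodicTiling d T)
    {t t' : Fin d → ℝ} (ht : t ∈ T) (ht' : t' ∈ T) (h : ¬ ∀ i, t i ≡ t' i [PMOD 2]) :
    ∃ i, t i + 1 ≡ t' i [PMOD 2] := by
  by_contra! hodd
  choose z hz using fun i => exists_abs_add_two_mul_sub_lt_one (hodd i)
  have hshift : (fun j => t' j + 2 * (z j : ℝ)) = t := by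
    by_contra hne
    obtain ⟨i, hi⟩ := disjoint_cube_iff.mp (hpair (hper t' ht' z) ht hne)
    exact (hz i).not_ge hi
  refine h fun i => ?_
  rw [← hshift]
  simpa only [mul_comm, zsmul_eq_mul] using add_zsmul_modEq (a := t' i) (p := (2 : ℝ)) (z i)

lemma exists_ne_not_modEq_two_of_add_one_modEq_two (hff : FaceshareFree d T)
    (hper : PeriodicTiling d T) {t t' : Fin d → ℝ} (ht : t ∈ T) (ht' : t' ∈ T) {i : Fin d}
    (hi : t i + 1 ≡ t' i [PMOD 2]) : ∃ j ≠ i, ¬ t j ≡ t' j [PMOD 2] := by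
  by_contra! hmod
  have hcoord : ∀ j, (t + stdBasis d i) j ≡ t' j [PMOD 2] := by
    intro j
    by_cases hj : j = i
    · subst hj; simpa [stdBasis] using hi
    · simpa [stdBasis, hj] using hmod j hj
  choose z hz using fun j => modEq_iff_eq_add_zsmul.mp (hcoord j).symm
  have hface : (fun j => t' j + 2 * (z j : ℝ)) = t + stdBasis d i := by
    funext j
    rw [hz j, zsmul_eq_mul, mul_comm]
  refine hff t ht _ (hper t' ht' z) (fun h => ?_) ⟨i, Or.inl hface⟩
  have := congrFun (h.trans hface) i
  simp [stdBasis] at this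

end Cubes

section TilingToClique

variable {d s : ℕ} {T : Set (Fin d → ℝ)}

lemma IsTiling.exists_mem_cube (htil : IsTiling d T) (y : Fin d → ℝ) : ∃ t ∈ T, y ∈ cube d t := by
  simpa using htil.2.ge (Set.mem_univ y)

noncomputable def tileCode (φ : Fin d → ℝ → Fin s) (t : Fin d → ℝ) : Fin d → Fin (2 * s) :=
  fun i => coordCode (φ i) (t i)

lemma tileCode_eq_iff {φ : Fin d → ℝ → Fin s} {S : Fin d → Set ℝ}
    (hφ : ∀ i, Set.InjOn (φ i) (S i)) (hS : ∀ i, ∀ t ∈ T, fract (t i) ∈ S i)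
    {t t' : Fin d → ℝ} (ht : t ∈ T) (ht' : t' ∈ T) :
    tileCode φ t = tileCode φ t' ↔ ∀ i, t i ≡ t' i [PMOD 2] := by
  simp only [funext_iff, tileCode, coordCode_eq_iff (hφ _) (hS _ t ht) (hS _ t' ht')]

lemma kellerGraph_adj_tileCode {φ : Fin d → ℝ → Fin s} {S : Fin d → Set ℝ}
    (hφ : ∀ i, Set.InjOn (φ i) (S i)) (hS : ∀ i, ∀ t ∈ T, fract (t i) ∈ S i)
    (hpair : T.Pairwise fun t t' => Disjoint (cube d t) (cube d t')) (hff : FaceshareFree d T)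
    (hper : PeriodicTiling d T) {t t' : Fin d → ℝ} (ht : t ∈ T) (ht' : t' ∈ T)
    (h : ¬ ∀ i, t i ≡ t' i [PMOD 2]) :
    (kellerGraph d s).Adj (tileCode φ t) (tileCode φ t') := by
  have hcode (j : Fin d) : tileCode φ t j = tileCode φ t' j ↔ t j ≡ t' j [PMOD 2] :=
    coordCode_eq_iff (hφ j) (hS j t ht) (hS j t' ht')
  obtain ⟨i, hi⟩ := exists_add_one_modEq_two_of_not_modEq_two hpair hper ht ht' h
  obtain ⟨j, hji, hj⟩ := exists_ne_not_modEq_two_of_add_one_modEq_two hff hper ht ht' hi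
  exact ⟨⟨i, coordCode_add_s_of_add_one_modEq_two (φ i) hi⟩, i, j, hji.symm,
    (hcode i).not.mpr (not_modEq_two_of_add_one_modEq_two hi), (hcode j).not.mpr hj⟩

lemma not_modEq_two_of_mem_cube_of_ne {v w : Fin d → Bool} {t t' : Fin d → ℝ}
    (hv : (fun i => ((v i).toNat : ℝ)) ∈ cube d t) (hw : (fun i => ((w i).toNat : ℝ)) ∈ cube d t')
    {i : Fin d} (hvw : v i ≠ w i) : ¬ t i ≡ t' i [PMOD 2] := by
  have hvi : ((v i).toNat : ℝ) ∈ Set.Ico (t i) (t i + 1) := hv i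
  have hwi : ((w i).toNat : ℝ) ∈ Set.Ico (t' i) (t' i + 1) := hw i
  cases hv' : v i <;> cases hw' : w i <;>
    simp only [hv', hw', Bool.toNat_false, Bool.toNat_true, Nat.cast_zero, Nat.cast_one, ne_eq,
      not_true_eq_false] at hvw hvi hwi
  · exact not_modEq_two_of_zero_mem_of_one_mem hvi hwi
  · exact fun h => not_modEq_two_of_zero_mem_of_one_mem hwi hvi h.symm

theorem exists_isNClique_of_isTiling (hs : 0 < s) (htil : IsTiling d T)
    (hff : FaceshareFree d T) (hper : PeriodicTiling d T) (hdis : SDiscrete d s T) :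
    ∃ K : Finset (Fin d → Fin (2 * s)), (kellerGraph d s).IsNClique (2 ^ d) K := by
  classical
  choose S hScard hS using hdis
  choose φ hφ using fun i => exists_injOn_fin hs (hScard i)
  have hcover : ∀ v : Fin d → Bool, ∃ t ∈ T, (fun i => ((v i).toNat : ℝ)) ∈ cube d t :=
    fun v => htil.exists_mem_cube _
  choose t htT hvt using hcover
  have hne : ∀ v w, v ≠ w → ¬ ∀ i, t v i ≡ t w i [PMOD 2] := by
    intro v w hvw hmod
    obtain ⟨i, hi⟩ := Function.ne_iff.mp hvw
    exact not_modEq_two_of_mem_cube_of_ne (hvt v) (hvt w) hi (hmod i)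
  have hcode (v w) : tileCode φ (t v) = tileCode φ (t w) ↔ ∀ i, t v i ≡ t w i [PMOD 2] :=
    tileCode_eq_iff hφ hS (htT v) (htT w)
  have hinj : Function.Injective fun v => tileCode φ (t v) := fun v w hvw =>
    not_imp_not.mp (hne v w) ((hcode v w).mp hvw)
  refine ⟨Finset.univ.image fun v => tileCode φ (t v), ?_, ?_⟩
  · simp only [Finset.coe_image, Finset.coe_univ, Set.image_univ]
    rintro _ ⟨v, rfl⟩ _ ⟨w, rfl⟩ hvw
    exact kellerGraph_adj_tileCode hφ hS htil.1 hff hper (htT v) (htT w)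
      ((hcode v w).not.mp hvw)
  · rw [Finset.card_image_of_injective _ hinj]
    simp

end TilingToClique

section CliqueToTiling

variable {d s : ℕ}

noncomputable def kellerCorner (k : Fin d → Fin (2 * s)) : Fin d → ℝ :=
  fun i => ((k i : ℕ) : ℝ) / s

def kellerTiling (K : Finset (Fin d → Fin (2 * s))) : Set (Fin d → ℝ) :=
  {t | ∃ k ∈ K, ∀ i, kellerCorner k i ≡ t i [PMOD 2]}

lemma kellerCorner_add_one (hs : 0 < s) {k k' : Fin d → Fin (2 * s)} {i : Fin d}
    (h : (k i : ℕ) + s = k' i) : kellerCorner k i + 1 = kellerCorner k' i := by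
  simp only [kellerCorner, ← h, Nat.cast_add]
  field_simp

lemma eq_of_kellerCorner_modEq_two (hs : 0 < s) {k k' : Fin d → Fin (2 * s)} {i : Fin d}
    (h : kellerCorner k i ≡ kellerCorner k' i [PMOD 2]) : k i = k' i := by
  have hs' : (s : ℝ) ≠ 0 := Nat.cast_ne_zero.mpr hs.ne'
  rw [kellerCorner, kellerCorner, div_modEq_div hs'] at h
  have h2s : (2 : ℝ) * s = ((2 * s : ℕ) : ℝ) := by push_cast; ring
  rw [h2s, natCast_modEq_natCast] at h
  exact Fin.ext (h.eq_of_lt_of_lt (k i).2 (k' i).2)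

lemma fract_kellerCorner_mem (k : Fin d → Fin (2 * s)) (i : Fin d) :
    fract (kellerCorner k i) ∈ (Finset.range s).image fun r : ℕ => (r : ℝ) / s := by
  rw [kellerCorner, Int.fract_div_natCast_eq_div_natCast_mod]
  have hs : 0 < s := by have := (k i).2; omega
  exact Finset.mem_image_of_mem _ (Finset.mem_range.mpr (Nat.mod_lt _ hs))

lemma add_one_modEq_two_of_add_s (hs : 0 < s) {k k' : Fin d → Fin (2 * s)} {t t' : Fin d → ℝ}
    (hkt : ∀ i, kellerCorner k i ≡ t i [PMOD 2]) (hkt' : ∀ i, kellerCorner k' i ≡ t' i [PMOD 2])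
    {i : Fin d} (h : (k i : ℕ) + s = k' i) : t i + 1 ≡ t' i [PMOD 2] :=
  ((hkt i).add_right 1).symm.trans (kellerCorner_add_one hs h ▸ hkt' i)

variable {K : Finset (Fin d → Fin (2 * s))}

lemma pairwise_disjoint_cube_kellerTiling (hs : 0 < s)
    (hK : (kellerGraph d s).IsClique (K : Set _)) :
    (kellerTiling K).Pairwise fun t t' => Disjoint (cube d t) (cube d t') := by
  rintro t ⟨k, hk, hkt⟩ t' ⟨k', hk', hkt'⟩ htt'
  refine disjoint_cube_iff.mpr ?_
  by_cases hkk : k = k'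
  · subst hkk
    obtain ⟨i, hi⟩ := Function.ne_iff.mp htt'
    have hmod : t i ≡ t' i [PMOD 2] := (hkt i).symm.trans (hkt' i)
    exact ⟨i, one_le_abs_sub_of_modEq_one (modEq_one_of_modEq_two hmod) hi⟩
  obtain ⟨⟨i, hi⟩, -⟩ := hK hk hk' hkk
  refine ⟨i, ?_⟩
  rcases hi with hi | hi
  · exact one_le_abs_sub_of_add_one_modEq_two (add_one_modEq_two_of_add_s hs hkt hkt' hi)
  · rw [abs_sub_comm]
    exact one_le_abs_sub_of_add_one_modEq_two (add_one_modEq_two_of_add_s hs hkt' hkt hi)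

lemma iUnion_cube_kellerTiling (hs : 0 < s) (hK : (kellerGraph d s).IsNClique (2 ^ d) K) :
    ⋃ t ∈ kellerTiling K, cube d t = Set.univ := by
  classical
  refine Set.eq_univ_of_forall fun y => Set.mem_iUnion₂.mpr ?_
  let parity (k : Fin d → Fin (2 * s)) (i : Fin d) : Bool := Even ⌊y i - kellerCorner k i⌋
  have hflip {k k' : Fin d → Fin (2 * s)} {i : Fin d} (h : (k i : ℕ) + s = k' i) :
      parity k' i ≠ parity k i := by
    simp [parity, ← kellerCorner_add_one hs h, ← sub_sub, ← Int.not_even_iff_odd]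
  have hinj : Set.InjOn parity K := by
    intro k hk k' hk' hkk'
    by_contra hne
    obtain ⟨⟨i, hi | hi⟩, -⟩ := hK.1 hk hk' hne
    · exact hflip hi (congrFun hkk' i).symm
    · exact hflip hi (congrFun hkk' i)
  have himage : K.image parity = Finset.univ := by
    refine Finset.eq_univ_of_card _ ?_
    rw [Finset.card_image_of_injOn hinj, hK.2]
    simp
  obtain ⟨k, hk, hkeven⟩ := Finset.mem_image.mp (himage ▸ Finset.mem_univ fun _ => true)
  refine ⟨fun i => kellerCorner k i + ⌊y i - kellerCorner k i⌋, ⟨k, hk, fun i => ?_⟩,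
    fun i => ⟨?_, ?_⟩⟩
  · obtain ⟨r, hr⟩ := of_decide_eq_true (congrFun hkeven i)
    rw [modEq_iff_eq_add_zsmul]
    exact ⟨r, by simp only [hr, zsmul_eq_mul]; push_cast; ring⟩
  · linarith [Int.floor_le (y i - kellerCorner k i)]
  · linarith [Int.lt_floor_add_one (y i - kellerCorner k i)]

lemma faceshareFree_kellerTiling (hs : 0 < s) (hK : (kellerGraph d s).IsClique (K : Set _)) :
    FaceshareFree d (kellerTiling K) := by
  rintro t ⟨k, hk, hkt⟩ t' ⟨k', hk', hkt'⟩ htt' ⟨i, hface⟩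
  have hcoord : ∀ j ≠ i, t j = t' j := by
    intro j hj
    rcases hface with rfl | rfl <;> simp [stdBasis, hj]
  have hkk : k = k' := by
    have hagree : ∀ j ≠ i, k j = k' j := fun j hj =>
      eq_of_kellerCorner_modEq_two hs ((hkt j).trans (hcoord j hj ▸ hkt' j).symm)
    by_contra hkk
    obtain ⟨-, j₁, j₂, hj, hj₁, hj₂⟩ := hK hk hk' hkk
    by_cases hj₁i : j₁ = i
    · exact hj₂ (hagree j₂ (hj₁i ▸ hj.symm))
    · exact hj₁ (hagree j₁ hj₁i)
  subst hkk
  have hmod : t i ≡ t' i [PMOD 2] := (hkt i).symm.trans (hkt' i)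
  rcases hface with rfl | rfl
  · exact not_modEq_two_of_add_one_modEq_two (by simp [stdBasis]) hmod
  · exact not_modEq_two_of_add_one_modEq_two (by simp [stdBasis]) hmod.symm

lemma periodicTiling_kellerTiling (K : Finset (Fin d → Fin (2 * s))) :
    PeriodicTiling d (kellerTiling K) := by
  rintro t ⟨k, hk, hkt⟩ z
  refine ⟨k, hk, fun i => (hkt i).trans ?_⟩
  simpa only [mul_comm, zsmul_eq_mul] using
    (add_zsmul_modEq (a := t i) (p := (2 : ℝ)) (z i)).symm

lemma sDiscrete_kellerTiling (K : Finset (Fin d → Fin (2 * s))) :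
    SDiscrete d s (kellerTiling K) := by
  refine fun i => ⟨(Finset.range s).image fun r : ℕ => (r : ℝ) / s,
    Finset.card_image_le.trans (Finset.card_range s).le, ?_⟩
  rintro t ⟨k, -, hkt⟩
  rw [← modEq_one_iff_fract_eq.mp (modEq_one_of_modEq_two (hkt i))]
  exact fract_kellerCorner_mem k i

end CliqueToTiling

theorem keller_clique_iff_discrete_periodic_tiling_general (d s : ℕ) (hs : 1 ≤ s) :
    (∃ K : Finset (Fin d → Fin (2 * s)), (kellerGraph d s).IsNClique (2 ^ d) K) ↔
    (∃ T : Set (Fin d → ℝ),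
      IsTiling d T ∧ FaceshareFree d T ∧ PeriodicTiling d T ∧ SDiscrete d s T) := by
  constructor
  · rintro ⟨K, hK⟩
    refine ⟨kellerTiling K, ⟨?_, ?_⟩, ?_, ?_, ?_⟩
    · exact pairwise_disjoint_cube_kellerTiling hs hK.1
    · exact iUnion_cube_kellerTiling hs hK
    · exact faceshareFree_kellerTiling hs hK.1
    · exact periodicTiling_kellerTiling K
    · exact sDiscrete_kellerTiling K
  · rintro ⟨T, htil, hff, hper, hdis⟩
    exact exists_isNClique_of_isTiling hs htil hff hper hdis

/-- For `d ≥ 1` and `s ≥ 1`, the Keller graph `G_{d,s}` has a clique of size `2^d`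
iff there exists a faceshare-free `s`-discrete periodic cube tiling of `ℝ^d`. -/
theorem keller_clique_iff_discrete_periodic_tiling (d s : ℕ) (hd : 1 ≤ d) (hs : 1 ≤ s) :
    (∃ K : Finset (Fin d → Fin (2 * s)), (kellerGraph d s).IsNClique (2 ^ d) K) ↔
    (∃ T : Set (Fin d → ℝ),
      IsTiling d T ∧ FaceshareFree d T ∧ PeriodicTiling d T ∧ SDiscrete d s T) :=
  keller_clique_iff_discrete_periodic_tiling_general d s hs
end
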